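/- Let g : ℝ → ℝ be C¹ with g'(u) ≤ ω₁ < ω² for all u, where ω = 2π/T. Then there exists a constant C > 0, depending only on T, ω₁ and ‖e‖_{L²(0,T)}, such that every C² T-periodic solution u of u'' + c·u' + g(u) = μ + e(t) satisfies ∫₀ᵀ (u''(t)² + u'(t)²) dt ≤ C, uniformly in μ. -/

import Mathlib

/-!
Multiplying the equation by `u''` and integrating over a period, the terms `μ u''` and
`c u' u''` are derivatives of periodic functions and `g(u) u''` integrates to `-∫ g'(u) u'²`,
so `‖u''‖² = ⟨e, u''⟩ + ∫ g'(u) u'²`. Wirtinger's inequality `ω² ‖u'‖² ≤ ‖u''‖²` (a consequence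
of Parseval's identity) bounds the last integral by `(1 - ε) ‖u''‖²`, where
`ε = 1 - max ω₁ 0 / ω² > 0`, and Young's inequality then gives `ε² ‖u''‖² ≤ ‖e‖²`, whatever
`c` and `μ` are. Wirtinger's inequality once more bounds `‖u'‖`.
-/

open MeasureTheory intervalIntegral Real
open scoped Interval

theorem fourierCoeffOn_zero_eq {a b : ℝ} (hab : a < b) (f : ℝ → ℂ) :
    fourierCoeffOn hab f 0 = (1 / (b - a) : ℂ) * ∫ x in a..b, f x := by
  simp [fourierCoeffOn_eq_integral]

theorem two_pi_div_mul_norm_fourierCoeffOn_le {a b : ℝ} (hab : a < b) {f f' : ℝ → ℂ}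
    (hf : ∀ x ∈ [[a, b]], HasDerivAt f (f' x) x) (hf' : IntervalIntegrable f' volume a b)
    (hfab : f a = f b) (hmean : ∫ x in a..b, f x = 0) (n : ℤ) :
    2 * π / (b - a) * ‖fourierCoeffOn hab f n‖ ≤ ‖fourierCoeffOn hab f' n‖ := by
  rcases eq_or_ne n 0 with rfl | hn
  · simp only [fourierCoeffOn_zero_eq, hmean, mul_zero, norm_zero]
    positivity
  have hL : 0 < b - a := sub_pos.2 hab
  have hn1 : (1 : ℝ) ≤ |(n : ℝ)| := by exact_mod_cast Int.one_le_abs hn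
  have hcoeff := fourierCoeffOn_of_hasDerivAt hab hn hf hf'
  rw [hfab, sub_self, mul_zero, zero_sub] at hcoeff
  have hnorm : ‖fourierCoeffOn hab f n‖ =
      (b - a) / (2 * π * |(n : ℝ)|) * ‖fourierCoeffOn hab f' n‖ := by
    rw [hcoeff, norm_mul, norm_neg, norm_mul, ← Complex.ofReal_sub, Complex.norm_real,
      Real.norm_of_nonneg hL.le]
    simp [abs_of_pos pi_pos]
    ring
  rw [hnorm, ← mul_assoc]
  refine mul_le_of_le_one_left (norm_nonneg _) ?_
  rw [div_mul_div_comm, div_le_one (by positivity)]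
  nlinarith [mul_le_mul_of_nonneg_left hn1 (by positivity : 0 ≤ 2 * π * (b - a))]

theorem Continuous.memLp_two_restrict_Ioc {f : ℝ → ℂ} (hf : Continuous f) (a b : ℝ) :
    MemLp f 2 (volume.restrict (Set.Ioc a b)) :=
  (memLp_two_iff_integrable_sq_norm hf.aestronglyMeasurable).2 (hf.norm.pow 2).integrableOn_Ioc

theorem wirtinger_inequality_complex {a b : ℝ} (hab : a < b) {f f' : ℝ → ℂ}
    (hf : ∀ x, HasDerivAt f (f' x) x) (hf' : Continuous f')
    (hfab : f a = f b) (hmean : ∫ x in a..b, f x = 0) :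
    (2 * π / (b - a)) ^ 2 * ∫ x in a..b, ‖f x‖ ^ 2 ≤ ∫ x in a..b, ‖f' x‖ ^ 2 := by
  have hfc : Continuous f := continuous_iff_continuousAt.2 fun x => (hf x).continuousAt
  have hsum := (hasSum_sq_fourierCoeffOn hab (hfc.memLp_two_restrict_Ioc a b)).mul_left
    ((2 * π / (b - a)) ^ 2)
  have hsum' := hasSum_sq_fourierCoeffOn hab (hf'.memLp_two_restrict_Ioc a b)
  have hterm (n : ℤ) : (2 * π / (b - a)) ^ 2 * ‖fourierCoeffOn hab f n‖ ^ 2 ≤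
      ‖fourierCoeffOn hab f' n‖ ^ 2 := by
    rw [← mul_pow]
    exact pow_le_pow_left₀ (by positivity) (two_pi_div_mul_norm_fourierCoeffOn_le hab
      (fun x _ => hf x) (hf'.intervalIntegrable a b) hfab hmean n) 2
  have hle := hasSum_le hterm hsum hsum'
  rw [smul_eq_mul, smul_eq_mul, mul_left_comm] at hle
  exact le_of_mul_le_mul_left hle (inv_pos.2 (sub_pos.2 hab))

theorem wirtinger_inequality {a b : ℝ} (hab : a < b) {f f' : ℝ → ℝ}
    (hf : ∀ x, HasDerivAt f (f' x) x) (hf' : Continuous f')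
    (hfab : f a = f b) (hmean : ∫ x in a..b, f x = 0) :
    (2 * π / (b - a)) ^ 2 * ∫ x in a..b, f x ^ 2 ≤ ∫ x in a..b, f' x ^ 2 := by
  have h := wirtinger_inequality_complex hab (fun x => (hf x).ofReal_comp)
    (Complex.continuous_ofReal.comp hf') (by rw [hfab])
    (by rw [intervalIntegral.integral_ofReal, hmean, Complex.ofReal_zero])
  simpa only [Complex.norm_real, Real.norm_eq_abs, sq_abs] using h

theorem Function.Periodic.deriv {𝕜 F : Type*} [NontriviallyNormedField 𝕜] [NormedAddCommGroup F]
    [NormedSpace 𝕜 F] {f : 𝕜 → F} {c : 𝕜} (h : Function.Periodic f c) :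
    Function.Periodic (deriv f) c := fun x => by
  rw [← deriv_comp_add_const, h.funext]

theorem Function.Periodic.integral_deriv_eq_zero {E : Type*} [NormedAddCommGroup E]
    [NormedSpace ℝ E] [CompleteSpace E] {F F' : ℝ → E} {T : ℝ} (hper : Function.Periodic F T)
    (hF : ∀ x, HasDerivAt F (F' x) x) (hF' : IntervalIntegrable F' volume 0 T) :
    ∫ x in (0 : ℝ)..T, F' x = 0 := by
  rw [integral_eq_sub_of_hasDerivAt (fun x _ => hF x) hF', ← zero_add T, hper, sub_self]

theorem integral_mul_le_young {a b ε : ℝ} (hab : a ≤ b) (hε : 0 < ε) {f g : ℝ → ℝ}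
    (hf : Continuous f) (hg : Continuous g) :
    ∫ x in a..b, f x * g x ≤
      (2 * ε)⁻¹ * (∫ x in a..b, f x ^ 2) + ε / 2 * ∫ x in a..b, g x ^ 2 := by
  rw [← intervalIntegral.integral_const_mul, ← intervalIntegral.integral_const_mul,
    ← intervalIntegral.integral_add ((by fun_prop : Continuous _).intervalIntegrable a b)
      ((by fun_prop : Continuous _).intervalIntegrable a b)]
  refine integral_mono_on hab ((hf.mul hg).intervalIntegrable a b)
    ((by fun_prop : Continuous _).intervalIntegrable a b) fun x _ => ?_
  have := sq_nonneg (f x - ε * g x)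
  rw [inv_eq_one_div, ← sub_nonneg]
  field_simp
  nlinarith

section PeriodicSolution

variable {T ω₁ c μ : ℝ} {g e u : ℝ → ℝ}

theorem continuous_forcing_of_solution (hg : Continuous g) (hu : ContDiff ℝ 2 u)
    (heq : ∀ t, deriv (deriv u) t + c * deriv u t + g (u t) = μ + e t) : Continuous e := by
  have hv : ContDiff ℝ 1 (deriv u) := hu.deriv'
  have he : e = fun t => deriv (deriv u) t + c * deriv u t + g (u t) - μ :=
    funext fun t => by linarith [heq t]
  rw [he]
  exact ((hv.continuous_deriv_one.add (continuous_const.mul hv.continuous)).add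
    (hg.comp hu.continuous)).sub continuous_const

theorem integral_sq_deriv_deriv_eq (hg : ContDiff ℝ 1 g) (hu : ContDiff ℝ 2 u)
    (hper : Function.Periodic u T)
    (heq : ∀ t, deriv (deriv u) t + c * deriv u t + g (u t) = μ + e t) :
    ∫ t in (0 : ℝ)..T, deriv (deriv u) t ^ 2 =
      (∫ t in (0 : ℝ)..T, e t * deriv (deriv u) t) +
        ∫ t in (0 : ℝ)..T, deriv g (u t) * deriv u t ^ 2 := by
  have hec := continuous_forcing_of_solution hg.continuous hu heq
  set v := deriv u
  set w := deriv v
  have hv : ContDiff ℝ 1 v := hu.deriv'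
  have hdu : ∀ x, HasDerivAt u (v x) x := fun x => (hu.differentiable two_ne_zero x).hasDerivAt
  have hdv : ∀ x, HasDerivAt v (w x) x := fun x => (hv.differentiable one_ne_zero x).hasDerivAt
  have hdg : ∀ x, HasDerivAt g (deriv g x) x :=
    fun x => (hg.differentiable one_ne_zero x).hasDerivAt
  -- The equation times `u''`: the integrand below is the derivative of a periodic function.
  have hF : ∀ t, HasDerivAt (fun t => μ * v t - c * v t ^ 2 / 2 - g (u t) * v t)
      (w t ^ 2 - e t * w t - deriv g (u t) * v t ^ 2) t := by
    intro t
    refine ((((hdv t).const_mul μ).sub (((hdv t).pow 2).const_mul c |>.div_const 2)).sub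
      (((hdg (u t)).comp t (hdu t)).mul (hdv t))).congr_deriv ?_
    simp only [Function.comp_apply, Nat.cast_ofNat, Nat.add_one_sub_one, pow_one]
    linear_combination -w t * heq t
  have hvper : Function.Periodic v T := hper.deriv
  have hper' : Function.Periodic (fun t => μ * v t - c * v t ^ 2 / 2 - g (u t) * v t) T :=
    fun t => by simp only [hper t, hvper t]
  have hzero :=
    hper'.integral_deriv_eq_zero hF ((by fun_prop : Continuous _).intervalIntegrable 0 T)
  rw [integral_sub ((by fun_prop : Continuous _).intervalIntegrable 0 T)
      ((by fun_prop : Continuous _).intervalIntegrable 0 T),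
    integral_sub ((by fun_prop : Continuous _).intervalIntegrable 0 T)
      ((by fun_prop : Continuous _).intervalIntegrable 0 T)] at hzero
  linarith

theorem wirtinger_inequality_of_periodic (hT : 0 < T)
    (hu : ContDiff ℝ 2 u) (hper : Function.Periodic u T) :
    (2 * π / T) ^ 2 * ∫ t in (0 : ℝ)..T, deriv u t ^ 2 ≤
      ∫ t in (0 : ℝ)..T, deriv (deriv u) t ^ 2 := by
  have hv : ContDiff ℝ 1 (deriv u) := hu.deriv'
  have hmean := hper.integral_deriv_eq_zero
    (fun x => (hu.differentiable two_ne_zero x).hasDerivAt) (hv.continuous.intervalIntegrable 0 T)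
  simpa only [sub_zero] using wirtinger_inequality hT
    (fun x => (hv.differentiable one_ne_zero x).hasDerivAt) hv.continuous_deriv_one
    (by rw [← zero_add T, hper.deriv]) hmean

theorem sq_mul_integral_sq_deriv_deriv_le (hT : 0 < T)
    (hω₁ : ω₁ < (2 * π / T) ^ 2) (hg : ContDiff ℝ 1 g) (hg' : ∀ x, deriv g x ≤ ω₁)
    (hu : ContDiff ℝ 2 u) (hper : Function.Periodic u T)
    (heq : ∀ t, deriv (deriv u) t + c * deriv u t + g (u t) = μ + e t) :
    (1 - max ω₁ 0 / (2 * π / T) ^ 2) ^ 2 * ∫ t in (0 : ℝ)..T, deriv (deriv u) t ^ 2 ≤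
      ∫ t in (0 : ℝ)..T, e t ^ 2 := by
  set ω2 := (2 * π / T) ^ 2
  set K := max ω₁ 0
  set ε := 1 - K / ω2
  set I1 := ∫ t in (0 : ℝ)..T, deriv u t ^ 2
  set I2 := ∫ t in (0 : ℝ)..T, deriv (deriv u) t ^ 2
  set E := ∫ t in (0 : ℝ)..T, e t ^ 2
  have hω2 : 0 < ω2 := by positivity
  have hε : 0 < ε := by
    have : K / ω2 < 1 := (div_lt_one hω2).2 (max_lt hω₁ hω2)
    linarith
  have hv : ContDiff ℝ 1 (deriv u) := hu.deriv'
  have hvc := hv.continuous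
  have hwc := hv.continuous_deriv_one
  have hwirt : ω2 * I1 ≤ I2 := wirtinger_inequality_of_periodic hT hu hper
  have hpot : ∫ t in (0 : ℝ)..T, deriv g (u t) * deriv u t ^ 2 ≤ K * I1 := by
    rw [← intervalIntegral.integral_const_mul]
    refine integral_mono_on hT.le
      (((hg.continuous_deriv_one.comp hu.continuous).mul (hvc.pow 2)).intervalIntegrable 0 T)
      ((continuous_const.mul (hvc.pow 2)).intervalIntegrable 0 T) fun t _ => ?_
    exact mul_le_mul_of_nonneg_right ((hg' _).trans (le_max_left _ _)) (sq_nonneg _)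
  have hforce :=
    integral_mul_le_young hT.le hε (continuous_forcing_of_solution hg.continuous hu heq) hwc
  have henergy := integral_sq_deriv_deriv_eq hg hu hper heq
  -- Wirtinger turns the potential term into `(1 - ε) I2`, leaving `ε I2 ≤ ∫ e u''`.
  have hKI1 : K * I1 ≤ (1 - ε) * I2 := by
    calc K * I1 = K / ω2 * (ω2 * I1) := by field_simp
      _ ≤ K / ω2 * I2 := by gcongr
      _ = (1 - ε) * I2 := by ring
  calc ε ^ 2 * I2 = 2 * ε * (ε / 2 * I2) := by ring
    _ ≤ 2 * ε * ((2 * ε)⁻¹ * E) := by gcongr 2 * ε * ?_; linarith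
    _ = E := by field_simp

end PeriodicSolution

theorem uniform_H2_estimate_general (T : ℝ) (hT : 0 < T) (ω₁ : ℝ)
    (hω₁ : ω₁ < (2 * π / T) ^ 2)
    (g : ℝ → ℝ) (hg : ContDiff ℝ 1 g) (hg' : ∀ u, deriv g u ≤ ω₁)
    (e : ℝ → ℝ) :
    ∃ C > 0, ∀ (c μ : ℝ) (u : ℝ → ℝ), ContDiff ℝ 2 u → Function.Periodic u T →
      (∀ t, iteratedDeriv 2 u t + c * deriv u t + g (u t) = μ + e t) →
      ∫ t in (0:ℝ)..T, ((iteratedDeriv 2 u t) ^ 2 + (deriv u t) ^ 2) ≤ C := by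
  set ω2 := (2 * π / T) ^ 2
  set ε := 1 - max ω₁ 0 / ω2
  set E := ∫ t in (0 : ℝ)..T, e t ^ 2
  have hω2 : 0 < ω2 := by positivity
  have hε : 0 < ε := sub_pos.2 ((div_lt_one hω2).2 (max_lt hω₁ hω2))
  have hE : 0 ≤ E := integral_nonneg hT.le fun t _ => sq_nonneg _
  refine ⟨(1 + ω2⁻¹) * (E / ε ^ 2) + 1, by positivity, fun c μ u hu hper heq => ?_⟩
  simp only [iteratedDeriv_succ, iteratedDeriv_zero] at heq ⊢
  have hv : ContDiff ℝ 1 (deriv u) := hu.deriv'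
  have hI2 : ∫ t in (0 : ℝ)..T, deriv (deriv u) t ^ 2 ≤ E / ε ^ 2 := by
    rw [le_div_iff₀ (by positivity), mul_comm]
    exact sq_mul_integral_sq_deriv_deriv_le hT hω₁ hg hg' hu hper heq
  have hI1 : ∫ t in (0 : ℝ)..T, deriv u t ^ 2 ≤ ω2⁻¹ * (E / ε ^ 2) := by
    rw [inv_mul_eq_div, le_div_iff₀ hω2, mul_comm]
    exact (wirtinger_inequality_of_periodic hT hu hper).trans hI2
  rw [intervalIntegral.integral_add (f := fun t => deriv (deriv u) t ^ 2)
    (g := fun t => deriv u t ^ 2) ((hv.continuous_deriv_one.pow 2).intervalIntegrable 0 T)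
    ((hv.continuous.pow 2).intervalIntegrable 0 T)]
  linarith

/-- Uniform a priori `H²`-type estimate for `T`-periodic solutions of
`u'' + c u' + g(u) = μ + e(t)`, when `g' ≤ ω₁ < ω²`. -/
theorem uniform_H2_estimate (T : ℝ) (hT : 0 < T) (ω₁ : ℝ)
    (hω₁ : ω₁ < (2 * π / T) ^ 2)
    (g : ℝ → ℝ) (hg : ContDiff ℝ 1 g) (hg' : ∀ u, deriv g u ≤ ω₁)
    (e : ℝ → ℝ) (he : Function.Periodic e T)
    (heL2 : IntervalIntegrable (fun t => (e t) ^ 2) volume 0 T)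
    (heavg : ∫ t in (0:ℝ)..T, e t = 0) :
    ∃ C > 0, ∀ (c μ : ℝ) (u : ℝ → ℝ), ContDiff ℝ 2 u → Function.Periodic u T →
      (∀ t, iteratedDeriv 2 u t + c * deriv u t + g (u t) = μ + e t) →
      ∫ t in (0:ℝ)..T, ((iteratedDeriv 2 u t) ^ 2 + (deriv u t) ^ 2) ≤ C :=
  uniform_H2_estimate_general T hT ω₁ hω₁ g hg hg' e
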